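/- arXiv:2311.18184 — 8 statements merged into one kernel-verified Lean document; each statement's English description precedes it below -/
import Mathlib

section
/- Let φ be a singular-expansive flow on a compact metric space X. Then the set of periodic orbits of φ is countable; that is, the collection of sets {φ_ℝ(x) : x is a periodic point of φ} is countable. -/
open Set Metric Filter
open scoped Classical

variable {X : Type*}

/-- A (continuous) flow on a topological space, given as a map `φ : ℝ → X → X`. -/
def IsFlowMap [TopologicalSpace X] (φ : ℝ → X → X) : Prop :=
  Continuous (fun p : ℝ × X => φ p.1 p.2) ∧ (∀ x : X, φ 0 x = x) ∧
    ∀ t s : ℝ, ∀ x : X, φ (t + s) x = φ t (φ s x)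

/-- The singular set of a flow. -/
def SingSet (φ : ℝ → X → X) : Set X := {x : X | ∀ t : ℝ, φ t x = x}

/-- An increasing homeomorphism of `ℝ`: a strictly increasing continuous bijection. -/
def IncreasingHomeo (s : ℝ → ℝ) : Prop :=
  Continuous s ∧ StrictMono s ∧ Function.Bijective s

/-- Distance from a point to a set, with the convention that the distance
to the empty set is the diameter of the whole space. -/
noncomputable def distToSet [MetricSpace X] (z : X) (A : Set X) : ℝ :=
  if A = ∅ then Metric.diam (Set.univ : Set X) else Metric.infDist z A

/-- The orbit of a point under a flow. -/
def flowOrbit (φ : ℝ → X → X) (x : X) : Set X := Set.range fun t : ℝ => φ t x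

/-- Bowen–Walters expansivity of a flow on a subset `Λ`. -/
def ExpansiveOn [MetricSpace X] (φ : ℝ → X → X) (Λ : Set X) : Prop :=
  ∀ ε > (0:ℝ), ∃ δ > (0:ℝ), ∀ x ∈ Λ, ∀ y ∈ Λ, ∀ s : ℝ → ℝ, Continuous s → s 0 = 0 →
    (∀ t : ℝ, dist (φ t x) (φ (s t) y) ≤ δ) →
    ∃ τ ∈ Set.Icc (-ε) ε, y = φ τ x

/-- Komuro k*-expansivity of a flow on a subset `Λ`. -/
def KStarExpansiveOn [MetricSpace X] (φ : ℝ → X → X) (Λ : Set X) : Prop :=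
  ∀ ε > (0:ℝ), ∃ δ > (0:ℝ), ∀ x ∈ Λ, ∀ y ∈ Λ, ∀ s : ℝ → ℝ,
    IncreasingHomeo s → s 0 = 0 →
    (∀ t : ℝ, dist (φ t x) (φ (s t) y) ≤ δ) →
    ∃ t₀ : ℝ, ∃ τ ∈ Set.Icc (t₀ - ε) (t₀ + ε), φ (s t₀) y = φ τ x

/-- Singular expansivity of a flow on a subset `Λ`. -/
def SingularExpansiveOn [MetricSpace X] (φ : ℝ → X → X) (Λ : Set X) : Prop :=
  ∀ ε > (0:ℝ), ∃ δ > (0:ℝ), ∀ x ∈ Λ, ∀ y ∈ Λ, ∀ s : ℝ → ℝ, IncreasingHomeo s →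
    (∀ t : ℝ, dist (φ t x) (φ (s t) y) ≤ δ * distToSet (φ t x) (SingSet φ)) →
    ∃ t₀ : ℝ, ∃ τ ∈ Set.Icc (t₀ - ε) (t₀ + ε), φ (s t₀) y = φ τ x

/-- A periodic point of a flow: a nonsingular point with a positive period. -/
def IsPeriodicPoint (φ : ℝ → X → X) (x : X) : Prop :=
  x ∉ SingSet φ ∧ ∃ t : ℝ, 0 < t ∧ φ t x = x

/-- An invariant set `K` is dynamically isolated if it has a neighborhood `U`
with `K = ⋂_{t ∈ ℝ} φ_t(U)`. -/
def DynIsolated [TopologicalSpace X] (φ : ℝ → X → X) (K : Set X) : Prop :=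
  ∃ U : Set X, K ⊆ interior U ∧ K = ⋂ t : ℝ, φ t '' U

/-- Equicontinuity of a flow. -/
def EquicontinuousFlow [MetricSpace X] (φ : ℝ → X → X) : Prop :=
  ∀ ε > (0:ℝ), ∃ δ > (0:ℝ), ∀ x y : X, dist x y ≤ δ →
    ∀ t : ℝ, dist (φ t x) (φ t y) ≤ ε

/-- Singular equicontinuity of a flow. -/
def SingularEquicontinuous [MetricSpace X] (φ : ℝ → X → X) : Prop :=
  ∀ ε > (0:ℝ), ∃ δ > (0:ℝ), ∀ x y : X, dist x y ≤ δ * distToSet x (SingSet φ) →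
    ∀ t : ℝ, dist (φ t x) (φ t y) ≤ ε


/-! Periodic orbits with period in `[r, r⁻¹]` that keep distance `r` from `Sing(φ)` form a
compact family of pairs (period, point). If `x` has period `T` close to `T₀` and lies close to a
`T₀`-periodic `p` of this family, then reparametrizing time by `t ↦ (T / T₀) t` makes the orbit of
`x` follow that of `p` uniformly within `δ r`, so singular expansivity puts `x` on the orbit of
`p`. The orbit map is therefore locally constant on the compact family, hence finite-valued, and
the families for `r = 1 / (n + 1)` exhaust all periodic orbits. -/

open Topology Function

namespace IsFlowMap

variable [TopologicalSpace X] {φ : ℝ → X → X}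

lemma continuous_apply (hφ : IsFlowMap φ) (t : ℝ) : Continuous (φ t) :=
  hφ.1.comp (Continuous.prodMk_right t)

lemma continuous_orbit (hφ : IsFlowMap φ) (x : X) : Continuous fun t => φ t x :=
  hφ.1.comp (continuous_id.prodMk continuous_const)

lemma periodic_mul_of_apply_eq (hφ : IsFlowMap φ) {T : ℝ} {x : X} (hT : φ T x = x) :
    Periodic (fun u => φ (T * u) x) 1 := fun u => by
  simp only [mul_add, mul_one, hφ.2.2, hT]

lemma apply_fract_of_apply_eq (hφ : IsFlowMap φ) {T : ℝ} {x : X} (hT : φ T x = x) (u : ℝ) :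
    φ (T * Int.fract u) x = φ (T * u) x := by
  have h := (hφ.periodic_mul_of_apply_eq hT).sub_int_mul_eq (x := u) ⌊u⌋
  simpa only [mul_one, Int.self_sub_floor] using h

lemma mem_singSet_of_apply_mem (hφ : IsFlowMap φ) {x : X} {t : ℝ} (h : φ t x ∈ SingSet φ) :
    x ∈ SingSet φ := by
  have hx : φ t x = x := by
    rw [← h (-t), ← hφ.2.2, neg_add_cancel, hφ.2.1]
  exact hx ▸ h

lemma flowOrbit_eq_of_apply_eq (hφ : IsFlowMap φ) {x y : X} {a b : ℝ} (h : φ a y = φ b x) :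
    flowOrbit φ y = flowOrbit φ x := by
  ext z
  constructor
  · rintro ⟨t, rfl⟩
    exact ⟨t - a + b, by simp only [hφ.2.2 _ b, ← h, ← hφ.2.2, sub_add_cancel]⟩
  · rintro ⟨t, rfl⟩
    exact ⟨t - b + a, by simp only [hφ.2.2 _ a, h, ← hφ.2.2, sub_add_cancel]⟩

lemma isClosed_singSet [T2Space X] (hφ : IsFlowMap φ) : IsClosed (SingSet φ) := by
  simp only [SingSet, ofPred_forall]
  exact isClosed_iInter fun t => isClosed_eq (hφ.continuous_apply t) continuous_id

end IsFlowMap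

lemma increasingHomeo_const_mul {c : ℝ} (hc : 0 < c) : IncreasingHomeo (c * ·) :=
  ⟨continuous_const_mul c, strictMono_mul_left_of_pos hc, (Homeomorph.mulLeft₀ c hc.ne').bijective⟩

section Metric

variable [MetricSpace X] {φ : ℝ → X → X}

lemma continuous_distToSet (A : Set X) : Continuous fun z : X => distToSet z A := by
  unfold distToSet
  split_ifs
  exacts [continuous_const, continuous_infDist_pt A]

lemma distToSet_singSet_pos [BoundedSpace X] (hφ : IsFlowMap φ) {z : X} (hz : z ∉ SingSet φ) :
    0 < distToSet z (SingSet φ) := by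
  unfold distToSet
  split_ifs with hS
  · obtain ⟨t, ht⟩ : ∃ t, φ t z ≠ z := by simpa [SingSet] using hz
    exact (dist_pos.2 ht).trans_le (dist_le_diam_of_mem BoundedSpace.bounded_univ trivial trivial)
  · exact (hφ.isClosed_singSet.notMem_iff_infDist_pos (nonempty_iff_ne_empty.2 hS)).1 hz

lemma IsPeriodicPoint.exists_pos_le_distToSet [CompactSpace X] (hφ : IsFlowMap φ) {x : X}
    (hx : IsPeriodicPoint φ x) : ∃ m > 0, ∀ t, m ≤ distToSet (φ t x) (SingSet φ) := by
  obtain ⟨hxS, T, hT, hTx⟩ := hx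
  have hperiodic : Periodic (fun t => φ t x) T := fun t => by simp only [hφ.2.2, hTx]
  have horbit : IsCompact (range fun t => φ t x) := by
    rw [← hperiodic.image_Icc hT 0]
    exact isCompact_Icc.image (hφ.continuous_orbit x)
  obtain ⟨_, ⟨t₀, rfl⟩, hmin⟩ :=
    horbit.exists_isMinOn (range_nonempty _) (continuous_distToSet (SingSet φ)).continuousOn
  exact ⟨_, distToSet_singSet_pos hφ fun h => hxS (hφ.mem_singSet_of_apply_mem h),
    fun t => hmin ⟨t, rfl⟩⟩

-- The bound `r ≤ T` keeps limits of periods positive.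
variable (φ) in
def periodicData (r : ℝ) : Set (ℝ × X) :=
  {q | q.1 ∈ Icc r r⁻¹ ∧ φ q.1 q.2 = q.2 ∧ ∀ t, r ≤ distToSet (φ t q.2) (SingSet φ)}

lemma periodicData_anti {r r' : ℝ} (hr : 0 < r) (h : r ≤ r') :
    periodicData φ r' ⊆ periodicData φ r := fun _ ⟨⟨hT₁, hT₂⟩, hper, hdist⟩ =>
  ⟨⟨h.trans hT₁, hT₂.trans (inv_anti₀ hr h)⟩, hper, fun t => h.trans (hdist t)⟩

lemma IsPeriodicPoint.exists_mem_periodicData [CompactSpace X] (hφ : IsFlowMap φ) {x : X}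
    (hx : IsPeriodicPoint φ x) : ∃ r > 0, ∃ T, (T, x) ∈ periodicData φ r := by
  obtain ⟨m, hm, hdist⟩ := hx.exists_pos_le_distToSet hφ
  obtain ⟨T, hT, hTx⟩ := hx.2
  set r := min m (min T T⁻¹)
  have hr : 0 < r := lt_min hm (lt_min hT (inv_pos.2 hT))
  refine ⟨r, hr, T, ⟨min_le_of_right_le (min_le_left _ _), ?_⟩, hTx,
    fun t => (min_le_left _ _).trans (hdist t)⟩
  exact le_inv_comm₀ hr hT |>.1 (min_le_of_right_le (min_le_right _ _))

lemma isCompact_periodicData [CompactSpace X] (hφ : IsFlowMap φ) (r : ℝ) :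
    IsCompact (periodicData φ r) := by
  refine (isCompact_Icc.prod isCompact_univ).of_isClosed_subset ?_ fun q hq => ⟨hq.1, trivial⟩
  simp only [periodicData, ofPred_and, ofPred_forall]
  refine (isClosed_Icc.preimage continuous_fst).inter
    ((isClosed_eq hφ.1 continuous_snd).inter (isClosed_iInter fun t => ?_))
  exact isClosed_le continuous_const
    ((continuous_distToSet _).comp ((hφ.continuous_apply t).comp continuous_snd))

end Metric

section Isolation

variable [MetricSpace X] [CompactSpace X] {φ : ℝ → X → X}

lemma eventually_flowOrbit_eq (hφ : IsFlowMap φ) (hexp : SingularExpansiveOn φ univ)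
    {T₀ r : ℝ} {p : X} (hT₀ : 0 < T₀) (hp : φ T₀ p = p) (hr : 0 < r)
    (hdist : ∀ t, r ≤ distToSet (φ t p) (SingSet φ)) :
    ∀ᶠ q in 𝓝 (T₀, p), φ q.1 q.2 = q.2 → flowOrbit φ q.2 = flowOrbit φ p := by
  obtain ⟨δ, hδ, hshadow⟩ := hexp 1 one_pos
  -- `γ q` runs through the orbit of `q.2` over one period `q.1` in unit time.
  set γ : ℝ × X → Icc (0 : ℝ) 1 → X := fun q a => φ (q.1 * a) q.2
  have hγ : TendstoUniformly γ (γ (T₀, p)) (𝓝 (T₀, p)) :=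
    Continuous.tendstoUniformly γ (hφ.1.comp (by fun_prop :
      Continuous fun z : (ℝ × X) × Icc (0 : ℝ) 1 => (z.1.1 * (z.2 : ℝ), z.1.2))) _
  filter_upwards [Metric.tendstoUniformly_iff.1 hγ (δ * r) (by positivity),
    (continuous_fst.tendsto (T₀, p)).eventually (lt_mem_nhds hT₀)] with ⟨T, x⟩ hclose hT hx
  have hcond : ∀ t, dist (φ t p) (φ (T / T₀ * t) x) ≤ δ * distToSet (φ t p) (SingSet φ) := by
    intro t
    set a : Icc (0 : ℝ) 1 := ⟨Int.fract (t / T₀), Int.fract_nonneg _, (Int.fract_lt_one _).le⟩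
    have hp_phase : γ (T₀, p) a = φ t p := by
      simp only [γ, a, hφ.apply_fract_of_apply_eq hp, mul_div_cancel₀ t hT₀.ne']
    have hx_phase : γ (T, x) a = φ (T / T₀ * t) x := by
      simp only [γ, a, hφ.apply_fract_of_apply_eq hx, mul_div_assoc', div_mul_eq_mul_div]
    calc dist (φ t p) (φ (T / T₀ * t) x) = dist (γ (T₀, p) a) (γ (T, x) a) := by
          rw [hp_phase, hx_phase]
      _ ≤ δ * r := (hclose a).le
      _ ≤ δ * distToSet (φ t p) (SingSet φ) := by gcongr; exact hdist t
  obtain ⟨_, _, -, heq⟩ :=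
    hshadow p trivial x trivial _ (increasingHomeo_const_mul (div_pos hT hT₀)) hcond
  exact hφ.flowOrbit_eq_of_apply_eq heq

lemma finite_flowOrbit_image_periodicData (hφ : IsFlowMap φ) (hexp : SingularExpansiveOn φ univ)
    {r : ℝ} (hr : 0 < r) : ((fun q : ℝ × X => flowOrbit φ q.2) '' periodicData φ r).Finite := by
  have := isCompact_iff_compactSpace.1 (isCompact_periodicData hφ r)
  have hloc : IsLocallyConstant fun q : periodicData φ r => flowOrbit φ q.1.2 := by
    refine (IsLocallyConstant.iff_eventually_eq _).2 fun q₀ => ?_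
    obtain ⟨⟨T₀, p⟩, hq₀⟩ := q₀
    refine (eventually_nhds_subtype_iff _ _ fun q : ℝ × X => flowOrbit φ q.2 = flowOrbit φ p).2 ?_
    obtain ⟨hT₀, hp, hdist⟩ := hq₀
    filter_upwards [nhdsWithin_le_nhds (eventually_flowOrbit_eq hφ hexp (hr.trans_le hT₀.1) hp hr
      hdist), self_mem_nhdsWithin] with q hq hqK using hq hqK.2.1
  simpa only [image_eq_range] using hloc.range_finite

end Isolation

theorem singular_expansive_countable_periodic_orbits
    [MetricSpace X] [CompactSpace X] (φ : ℝ → X → X) (hφ : IsFlowMap φ)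
    (h : SingularExpansiveOn φ Set.univ) :
    Set.Countable {O : Set X | ∃ x : X, IsPeriodicPoint φ x ∧ O = flowOrbit φ x} := by
  have hcover : {O : Set X | ∃ x : X, IsPeriodicPoint φ x ∧ O = flowOrbit φ x} ⊆
      ⋃ n : ℕ, (fun q : ℝ × X => flowOrbit φ q.2) '' periodicData φ (1 / (n + 1)) := by
    rintro O ⟨x, hx, rfl⟩
    obtain ⟨r, hr, T, hT⟩ := hx.exists_mem_periodicData hφ
    obtain ⟨n, hn⟩ := exists_nat_one_div_lt hr
    exact mem_iUnion.2 ⟨n, (T, x), periodicData_anti (by positivity) hn.le hT, rfl⟩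
  exact (countable_iUnion fun n =>
    (finite_flowOrbit_image_periodicData hφ h (by positivity)).countable).mono hcover
end

section
/- Let φ be a flow on a compact metric space X. If Sing(φ) is dynamically isolated, then there exists β₀ > 0 such that the diameter of the orbit φ_ℝ(x) is at least β₀ for every x ∈ X \ Sing(φ). -/
open Set Metric Filter
open scoped Classical

variable {X : Type*}

theorem dyn_isolated_sing_orbits_diam_bounded_below
    [MetricSpace X] [CompactSpace X] (φ : ℝ → X → X) (hφ : IsFlowMap φ)
    (hiso : DynIsolated φ (SingSet φ)) :
    ∃ β₀ > (0:ℝ), ∀ x : X, x ∉ SingSet φ → β₀ ≤ Metric.diam (flowOrbit φ x) := by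
  by_contra h
  push_neg at h
  choose x hx1 hx2 using fun n : ℕ => h (1 / (n + 1)) (by positivity)
  obtain ⟨a, -, g, hg1, hg2⟩ := isCompact_univ.tendsto_subseq (x := x) (fun n => mem_univ _)
  have hc : ∀ t : ℝ, Continuous (φ t) := fun t =>
    hφ.1.comp (continuous_const.prodMk continuous_id)
  have hbd : ∀ n : ℕ, ∀ t : ℝ, dist (φ t (x n)) (x n) ≤ 1 / (n + 1) := by
    intro n t
    have hb : Bornology.IsBounded (flowOrbit φ (x n)) :=
      isCompact_univ.isBounded.subset (subset_univ _)
    have h1 : dist (φ t (x n)) (x n) ≤ Metric.diam (flowOrbit φ (x n)) := by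
      refine Metric.dist_le_diam_of_mem hb ⟨t, rfl⟩ ⟨0, hφ.2.1 _⟩
    linarith [hx2 n]
  have hone : Filter.Tendsto (fun n : ℕ => (1 : ℝ) / (n + 1)) atTop (nhds 0) :=
    tendsto_one_div_add_atTop_nhds_zero_nat
  have ha : a ∈ SingSet φ := by
    intro t
    have h1 : Filter.Tendsto (fun n => dist (φ t (x (g n))) (x (g n))) atTop
        (nhds (dist (φ t a) a)) :=
      (((hc t).continuousAt.tendsto.comp hg2).dist hg2)
    have h2 : Filter.Tendsto (fun n => dist (φ t (x (g n))) (x (g n))) atTop (nhds 0) := by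
      refine squeeze_zero (fun n => dist_nonneg) (fun n => ?_) hone
      calc dist (φ t (x (g n))) (x (g n)) ≤ 1 / (g n + 1) := hbd _ t
        _ ≤ 1 / (n + 1) := by
            apply one_div_le_one_div_of_le (by positivity)
            have h3 : (n : ℝ) ≤ g n := Nat.cast_le.mpr hg1.le_apply
            linarith
    have := tendsto_nhds_unique h1 h2
    exact eq_of_dist_eq_zero this
  obtain ⟨U, hU1, hU2⟩ := hiso
  obtain ⟨ε, hε, hball⟩ := Metric.isOpen_iff.1 isOpen_interior a (hU1 ha)
  have hxa : ∀ᶠ n in atTop, dist (x (g n)) a < ε / 2 :=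
    Filter.eventually_atTop.2 (Metric.tendsto_atTop.1 hg2 (ε / 2) (by linarith))
  have hsm : ∀ᶠ n : ℕ in atTop, (1 : ℝ) / (n + 1) < ε / 2 :=
    hone.eventually (eventually_lt_nhds (show (0:ℝ) < ε / 2 by linarith))
  obtain ⟨N, hN1, hN2⟩ := (hxa.and hsm).exists
  have hsub : flowOrbit φ (x (g N)) ⊆ U := by
    rintro y ⟨t, rfl⟩
    refine interior_subset (hball ?_)
    rw [Metric.mem_ball]
    have h1 : dist (φ t (x (g N))) (x (g N)) ≤ 1 / (g N + 1) := hbd _ t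
    have h2 : (1 : ℝ) / (g N + 1) ≤ 1 / (N + 1) := by
      apply one_div_le_one_div_of_le (by positivity)
      have h3 : (N : ℝ) ≤ g N := Nat.cast_le.mpr hg1.le_apply
      linarith
    calc dist (φ t (x (g N))) a ≤ dist (φ t (x (g N))) (x (g N)) + dist (x (g N)) a :=
          dist_triangle _ _ _
      _ < ε := by linarith
  have hx_sing : x (g N) ∈ SingSet φ := by
    rw [hU2, Set.mem_iInter]
    intro t
    refine ⟨φ (-t) (x (g N)), hsub ⟨-t, rfl⟩, ?_⟩
    rw [← hφ.2.2]
    simp [hφ.2.1]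
  exact hx1 (g N) hx_sing
end

section
/- Let φ be a flow on a compact metric space X. If φ is expansive on X \ Sing(φ), then φ is singular-expansive. -/
open Set Metric Filter
open scoped Classical

variable {X : Type*}

/-!
If `x` or `φ_{s(0)} y` is singular, the bound `d(x, φ_{s(0)} y) ≤ δ · dist(x, Sing φ)` with
`δ < 1` forces `φ_{s(0)} y = x`. Otherwise both points are regular, and since `X` is bounded,
`δ · dist(·, Sing φ) ≤ δ · diam X` is as small as we like, so Bowen–Walters expansivity off
`Sing φ`, applied to `x`, `φ_{s(0)} y` and the reparametrization `t ↦ s(t) - s(0)`, gives the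
conclusion at `t₀ = 0`.
-/

section distToSet

variable [MetricSpace X] {z w : X} {A : Set X}

lemma distToSet_eq_zero_of_mem (hz : z ∈ A) : distToSet z A = 0 := by
  rw [distToSet, if_neg (nonempty_iff_ne_empty.mp ⟨z, hz⟩), infDist_zero_of_mem hz]

lemma distToSet_le_dist_of_mem (hw : w ∈ A) : distToSet z A ≤ dist z w := by
  rw [distToSet, if_neg (nonempty_iff_ne_empty.mp ⟨w, hw⟩)]
  exact infDist_le_dist_of_mem hw

lemma distToSet_le_diam [BoundedSpace X] : distToSet z A ≤ diam (univ : Set X) := by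
  unfold distToSet
  split_ifs with hA
  · exact le_rfl
  · obtain ⟨a, ha⟩ := nonempty_iff_ne_empty.mpr hA
    exact (infDist_le_dist_of_mem ha).trans
      (dist_le_diam_of_mem BoundedSpace.bounded_univ (mem_univ _) (mem_univ _))

lemma eq_of_dist_le_mul_distToSet {δ : ℝ} (hδ₀ : 0 ≤ δ) (hδ₁ : δ < 1)
    (hzw : dist z w ≤ δ * distToSet z A) (hA : z ∈ A ∨ w ∈ A) : z = w := by
  rcases hA with hz | hw
  · rw [distToSet_eq_zero_of_mem hz, mul_zero] at hzw
    exact dist_le_zero.mp hzw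
  · have hle : dist z w ≤ δ * dist z w :=
      hzw.trans (mul_le_mul_of_nonneg_left (distToSet_le_dist_of_mem hw) hδ₀)
    exact dist_eq_zero.mp (by nlinarith [dist_nonneg (x := z) (y := w)])

lemma mul_distToSet_le [BoundedSpace X] {δ δ' : ℝ} (hδ₀ : 0 ≤ δ)
    (hδ : δ ≤ δ' / (diam (univ : Set X) + 1)) : δ * distToSet z A ≤ δ' := by
  have hD : 0 < diam (univ : Set X) + 1 := by linarith [diam_nonneg (s := (univ : Set X))]
  calc δ * distToSet z A ≤ δ * (diam (univ : Set X) + 1) :=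
        mul_le_mul_of_nonneg_left (distToSet_le_diam.trans (le_add_of_nonneg_right zero_le_one))
          hδ₀
    _ ≤ δ' := (le_div_iff₀ hD).mp hδ

end distToSet

lemma IsFlowMap.apply_sub_apply [TopologicalSpace X] {φ : ℝ → X → X} (hφ : IsFlowMap φ)
    (a b : ℝ) (y : X) : φ (a - b) (φ b y) = φ a y := by
  rw [← hφ.2.2, sub_add_cancel]

theorem expansive_off_sing_implies_singular_expansive
    [MetricSpace X] [CompactSpace X] (φ : ℝ → X → X) (hφ : IsFlowMap φ)
    (h : ExpansiveOn φ (SingSet φ)ᶜ) : SingularExpansiveOn φ Set.univ := by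
  intro ε hε
  obtain ⟨δ', hδ', hexp⟩ := h ε hε
  set δ := min (δ' / (diam (univ : Set X) + 1)) (1 / 2)
  have hδ : 0 < δ :=
    lt_min (div_pos hδ' (by linarith [diam_nonneg (s := (univ : Set X))])) (by norm_num)
  refine ⟨δ, hδ, ?_⟩
  rintro x - y - s hs hd
  have hd₀ := hd 0
  rw [hφ.2.1] at hd₀
  by_cases hsing : x ∈ SingSet φ ∨ φ (s 0) y ∈ SingSet φ
  · refine ⟨0, 0, by simp [hε.le], ?_⟩
    rw [hφ.2.1, eq_of_dist_le_mul_distToSet hδ.le (by norm_num [δ]) hd₀ hsing]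
  · rw [not_or] at hsing
    have hclose (t : ℝ) : dist (φ t x) (φ (s t - s 0) (φ (s 0) y)) ≤ δ' := by
      rw [hφ.apply_sub_apply]
      exact (hd t).trans (mul_distToSet_le hδ.le (min_le_left _ _))
    obtain ⟨τ, hτ, hτy⟩ := hexp x hsing.1 _ hsing.2 (fun t ↦ s t - s 0)
      (hs.1.sub continuous_const) (sub_self _) hclose
    exact ⟨0, τ, by simpa using hτ, hτy⟩
end

section
/- Let φ be a flow on a compact metric space X. Suppose that for every ε>0 there is δ>0 such that for every x ∈ X, the closed ball B[x, δ·dist(x,Sing(φ))] is contained in φ_{[−ε,ε]}(x). Then φ is singular-equicontinuous. -/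
open Set Metric Filter
open scoped Classical

variable {X : Type*}

theorem ball_in_orbit_segment_implies_singular_equicontinuous
    [MetricSpace X] [CompactSpace X] (φ : ℝ → X → X) (hφ : IsFlowMap φ)
    (h : ∀ ε > (0:ℝ), ∃ δ > (0:ℝ), ∀ x : X,
      Metric.closedBall x (δ * distToSet x (SingSet φ)) ⊆
        (fun τ : ℝ => φ τ x) '' Set.Icc (-ε) ε) :
    SingularEquicontinuous φ := by
  obtain ⟨hc, h0, hadd⟩ := hφ
  intro ε hε
  have hopen : IsOpen {p : ℝ × X | dist p.2 (φ p.1 p.2) < ε} := by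
    have : Continuous fun p : ℝ × X => dist p.2 (φ p.1 p.2) :=
      Continuous.dist continuous_snd hc
    exact isOpen_lt this continuous_const
  have hsub : ({(0:ℝ)} ×ˢ (univ : Set X)) ⊆ {p : ℝ × X | dist p.2 (φ p.1 p.2) < ε} := by
    rintro ⟨t, z⟩ ⟨ht, -⟩
    simp only [mem_singleton_iff] at ht
    simp [Set.mem_setOf_eq, ht, h0, hε]
  obtain ⟨u, v, hu, hv, h0u, hvuniv, huv⟩ :=
    generalized_tube_lemma isCompact_singleton isCompact_univ hopen hsub
  obtain ⟨r, hr, hru⟩ := Metric.isOpen_iff.1 hu 0 (h0u rfl)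
  obtain ⟨δ, hδ, hball⟩ := h (r/2) (by positivity)
  refine ⟨δ, hδ, fun x y hxy t => ?_⟩
  have hy : y ∈ Metric.closedBall x (δ * distToSet x (SingSet φ)) := by
    rw [Metric.mem_closedBall, dist_comm]; exact hxy
  obtain ⟨τ, hτ, hyx⟩ := hball x hy
  have key : φ t y = φ τ (φ t x) := by
    rw [← hyx]; dsimp only; rw [← hadd, ← hadd, add_comm]
  rw [key]
  have hτu : (τ, φ t x) ∈ u ×ˢ v := by
    refine ⟨hru ?_, hvuniv (mem_univ _)⟩
    rw [Metric.mem_ball, Real.dist_eq, sub_zero]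
    have : |τ| ≤ r/2 := abs_le.2 ⟨hτ.1, hτ.2⟩
    linarith
  exact (huv hτu).le
end

section
/- Let X = {(0,0)} ∪ ⋃_{n∈ℕ} {z ∈ ℝ² : ‖z‖ = e^{−n}}, equipped with the Euclidean metric, and let φ : ℝ × X → X be the rotation flow φ_t(x,y) = (x cos t − y sin t, x sin t + y cos t). Then φ is a well-defined singular-expansive flow on X, and the set of periodic orbits of φ of period 2π is infinite (every point of X other than the origin is a periodic point of least period 2π, and these points lie on infinitely many distinct orbits). -/
open Set Metric Filter
open scoped Classical

variable {X : Type*}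

/-- The subset of the plane (identified with `ℂ`) consisting of the origin together
with the circles of radius `e^{-n}`, `n ∈ ℕ`, centered at the origin. -/
def circlesExp : Set ℂ :=
  {0} ∪ ⋃ n : ℕ, {z : ℂ | ‖z‖ = Real.exp (-(n : ℝ))}

lemma rot_mem_circlesExp (t : ℝ) (z : ℂ) (hz : z ∈ circlesExp) :
    Complex.exp (t * Complex.I) * z ∈ circlesExp := by
  rcases hz with hz | hz
  · simp only [Set.mem_singleton_iff] at hz
    left
    simp [hz]
  · right
    simp only [Set.mem_iUnion, Set.mem_setOf_eq] at hz ⊢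
    obtain ⟨n, hn⟩ := hz
    refine ⟨n, ?_⟩
    rw [norm_mul, Complex.norm_exp_ofReal_mul_I, one_mul]
    exact hn

/-- The rotation flow on `circlesExp`. -/
noncomputable def rotFlowExp : ℝ → circlesExp → circlesExp := fun t z =>
  ⟨Complex.exp (t * Complex.I) * (z : ℂ), rot_mem_circlesExp t z z.2⟩

/-!
The rotation flow preserves the norm, so its only singular point is the origin and the distance
of `z` to the singular set is `‖z‖`. Singular expansivity is witnessed at the single time `t = 0`:
if `‖x - w‖ ≤ δ ‖x‖` with `δ < 1 - e⁻¹`, then `w` lies on the circle of `x`, because neighbouring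
radii differ by the factor `e`; so `w = e^{iθ} x` with `|θ| ≤ π`, and Jordan's inequality turns
`|e^{iθ} - 1| ≤ δ` into `|θ| ≤ π δ / 2`. Every point of a circle has least period `2π`, and
circles of different radii are different orbits.
-/

open Real

lemma one_sub_exp_neg_one_mul_le_abs_exp_sub {a b : ℝ} (hab : 1 ≤ |a - b|) :
    (1 - exp (-1)) * exp a ≤ |exp a - exp b| := by
  rcases le_abs'.1 hab with hb | hb
  · have : exp a * exp 1 ≤ exp b := by rw [← exp_add]; exact exp_le_exp.2 (by linarith)
    have : (2 : ℝ) ≤ exp 1 := by linarith [add_one_le_exp (1 : ℝ)]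
    rw [abs_sub_comm]
    nlinarith [exp_pos a, exp_pos (-1), le_abs_self (exp b - exp a)]
  · have : exp b ≤ exp a * exp (-1) := by rw [← exp_add]; exact exp_le_exp.2 (by linarith)
    nlinarith [le_abs_self (exp a - exp b)]

namespace Complex

lemma two_div_pi_mul_abs_le_norm_exp_ofReal_mul_I_sub_one {θ : ℝ} (hθ : |θ| ≤ π) :
    2 / π * |θ| ≤ ‖exp (θ * I) - 1‖ := by
  have jordan := mul_abs_le_abs_sin (x := θ / 2) (by rw [abs_div, abs_two]; linarith)
  rw [abs_div, abs_two] at jordan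
  rw [mul_comm (θ : ℂ), norm_exp_I_mul_ofReal_sub_one, norm_mul, Real.norm_eq_abs,
    Real.norm_eq_abs, abs_two]
  linarith

lemma exists_abs_le_and_eq_exp_mul_of_norm_sub_le {x w : ℂ} {c : ℝ} (hx : x ≠ 0)
    (hnorm : ‖w‖ = ‖x‖) (hdist : ‖x - w‖ ≤ c * ‖x‖) :
    ∃ θ : ℝ, |θ| ≤ π / 2 * c ∧ w = exp (θ * I) * x := by
  have hx' : 0 < ‖x‖ := norm_pos_iff.2 hx
  set θ := arg (w / x)
  have hw : w = exp (θ * I) * x := by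
    have := norm_mul_exp_arg_mul_I (w / x)
    rw [norm_div, hnorm, div_self hx'.ne', ofReal_one, one_mul] at this
    rw [this, div_mul_cancel₀ _ hx]
  have hchord : ‖exp (θ * I) - 1‖ ≤ c := by
    rw [hw, ← one_sub_mul, norm_mul, norm_sub_rev] at hdist
    exact le_of_mul_le_mul_right hdist hx'
  refine ⟨θ, ?_, hw⟩
  calc |θ| = π / 2 * (2 / π * |θ|) := by field_simp
    _ ≤ π / 2 * c := by
      gcongr
      exact (two_div_pi_mul_abs_le_norm_exp_ofReal_mul_I_sub_one (abs_arg_le_pi _)).trans hchord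

end Complex

def HasLeastPeriod (φ : ℝ → X → X) (T : ℝ) (x : X) : Prop :=
  x ∉ SingSet φ ∧ φ T x = x ∧ ∀ τ : ℝ, 0 < τ → φ τ x = x → T ≤ τ

namespace circlesExp

instance : Zero circlesExp := ⟨⟨0, Or.inl rfl⟩⟩

@[simp]
lemma coe_zero : ((0 : circlesExp) : ℂ) = 0 := rfl

lemma norm_eq_of_abs_norm_sub_lt {x w : ℂ} (hx : x ∈ circlesExp) (hw : w ∈ circlesExp)
    (hx0 : x ≠ 0) (hxw : |‖x‖ - ‖w‖| < (1 - exp (-1)) * ‖x‖) : ‖w‖ = ‖x‖ := by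
  obtain ⟨n, hn : ‖x‖ = exp (-(n : ℝ))⟩ := mem_iUnion.1 (hx.resolve_left hx0)
  rcases hw with hw | hw
  · rw [mem_singleton_iff.1 hw, norm_zero, sub_zero, abs_norm] at hxw
    nlinarith [exp_pos (-1), norm_pos_iff.2 hx0]
  obtain ⟨m, hm : ‖w‖ = exp (-(m : ℝ))⟩ := mem_iUnion.1 hw
  rw [hn, hm] at hxw ⊢
  by_contra hne
  have hmn : m ≠ n := by rintro rfl; exact hne rfl
  have gap : 1 ≤ |-(n : ℝ) - -(m : ℝ)| := by
    rcases hmn.lt_or_gt with h | h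
    · have : (m : ℝ) + 1 ≤ n := by exact_mod_cast h
      exact le_abs.2 (Or.inr (by linarith))
    · have : (n : ℝ) + 1 ≤ m := by exact_mod_cast h
      exact le_abs.2 (Or.inl (by linarith))
  linarith [one_sub_exp_neg_one_mul_le_abs_exp_sub gap]

end circlesExp

lemma rotFlowExp_coe (t : ℝ) (x : circlesExp) :
    (rotFlowExp t x : ℂ) = Complex.exp (t * Complex.I) * x := rfl

lemma norm_rotFlowExp (t : ℝ) (x : circlesExp) : ‖(rotFlowExp t x : ℂ)‖ = ‖(x : ℂ)‖ := by
  rw [rotFlowExp_coe, norm_mul, Complex.norm_exp_ofReal_mul_I, one_mul]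

lemma rotFlowExp_zero_left (x : circlesExp) : rotFlowExp 0 x = x :=
  Subtype.ext (by simp [rotFlowExp_coe])

lemma rotFlowExp_zero_right (t : ℝ) : rotFlowExp t 0 = 0 :=
  Subtype.ext (by simp [rotFlowExp_coe])

lemma isFlowMap_rotFlowExp : IsFlowMap rotFlowExp := by
  refine ⟨?_, rotFlowExp_zero_left, fun t s x => Subtype.ext ?_⟩
  · exact Continuous.subtype_mk (by fun_prop) _
  · simp only [rotFlowExp_coe]
    push_cast
    rw [add_mul, Complex.exp_add, mul_assoc]

lemma singSet_rotFlowExp : SingSet rotFlowExp = {0} := by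
  refine subset_antisymm (fun x hx => ?_) (by rintro _ rfl t; exact rotFlowExp_zero_right t)
  have h := congrArg Subtype.val (hx π)
  rw [rotFlowExp_coe, Complex.exp_pi_mul_I, neg_one_mul, neg_eq_self] at h
  exact Subtype.ext h

lemma distToSet_singSet_rotFlowExp (z : circlesExp) :
    distToSet z (SingSet rotFlowExp) = ‖(z : ℂ)‖ := by
  rw [singSet_rotFlowExp, distToSet, if_neg (singleton_ne_empty _), infDist_singleton,
    Subtype.dist_eq, circlesExp.coe_zero, dist_zero_right]

lemma rotFlowExp_eq_self_iff {x : circlesExp} (hx : (x : ℂ) ≠ 0) {τ : ℝ} :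
    rotFlowExp τ x = x ↔ ∃ n : ℤ, τ = n * (2 * π) := by
  rw [← Subtype.val_inj, rotFlowExp_coe, mul_left_eq_self₀, or_iff_left hx,
    Complex.exp_eq_one_iff]
  refine exists_congr fun n => ?_
  rw [← mul_assoc, mul_left_inj' Complex.I_ne_zero]
  exact_mod_cast Iff.rfl

lemma hasLeastPeriod_rotFlowExp {x : circlesExp} (hx : (x : ℂ) ≠ 0) :
    HasLeastPeriod rotFlowExp (2 * π) x := by
  refine ⟨?_, (rotFlowExp_eq_self_iff hx).2 ⟨1, by simp⟩, fun τ hτ hτx => ?_⟩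
  · rw [singSet_rotFlowExp]
    rintro rfl
    exact hx rfl
  obtain ⟨n, rfl⟩ := (rotFlowExp_eq_self_iff hx).1 hτx
  have : (0 : ℝ) < n := pos_of_mul_pos_left hτ (by positivity)
  have : (1 : ℝ) ≤ n := by exact_mod_cast (show (0 : ℤ) < n by exact_mod_cast this)
  nlinarith [pi_pos]

lemma exists_rotFlowExp_eq_of_dist_le {x w : circlesExp} {δ : ℝ} (hδ0 : 0 ≤ δ)
    (hδ : δ < 1 - exp (-1)) (hxw : dist x w ≤ δ * ‖(x : ℂ)‖) :
    ∃ θ : ℝ, |θ| ≤ π / 2 * δ ∧ w = rotFlowExp θ x := by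
  rw [Subtype.dist_eq, dist_eq_norm] at hxw
  by_cases hx : (x : ℂ) = 0
  · have hw : w = x := by
      rw [hx, zero_sub, norm_neg, norm_zero, mul_zero, norm_le_zero_iff] at hxw
      exact Subtype.ext (hxw.trans hx.symm)
    exact ⟨0, by rw [abs_zero]; positivity, by rw [hw, rotFlowExp_zero_left]⟩
  have hnorm : ‖(w : ℂ)‖ = ‖(x : ℂ)‖ := by
    refine circlesExp.norm_eq_of_abs_norm_sub_lt x.2 w.2 hx ?_
    calc |‖(x : ℂ)‖ - ‖(w : ℂ)‖| ≤ ‖(x : ℂ) - w‖ := abs_norm_sub_norm_le _ _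
      _ ≤ δ * ‖(x : ℂ)‖ := hxw
      _ < (1 - exp (-1)) * ‖(x : ℂ)‖ := by gcongr
  obtain ⟨θ, hθ, hwθ⟩ := Complex.exists_abs_le_and_eq_exp_mul_of_norm_sub_le hx hnorm hxw
  exact ⟨θ, hθ, Subtype.ext hwθ⟩

lemma singularExpansiveOn_rotFlowExp : SingularExpansiveOn rotFlowExp univ := by
  intro ε hε
  have hexp : exp (-1) < 1 := exp_lt_one_iff.2 (by norm_num)
  refine ⟨min (2 / π * ε) ((1 - exp (-1)) / 2), lt_min (by positivity) (by linarith),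
    fun x _ y _ s _ hshadow => ?_⟩
  have h0 := hshadow 0
  rw [rotFlowExp_zero_left, distToSet_singSet_rotFlowExp] at h0
  obtain ⟨θ, hθ, hyθ⟩ := exists_rotFlowExp_eq_of_dist_le (by positivity)
    ((min_le_right _ _).trans_lt (by linarith)) h0
  have hθε : |θ| ≤ ε := hθ.trans <| by
    calc π / 2 * min (2 / π * ε) ((1 - exp (-1)) / 2) ≤ π / 2 * (2 / π * ε) := by
          gcongr; exact min_le_left _ _
      _ = ε := by field_simp
  exact ⟨0, θ, ⟨by linarith [neg_abs_le θ], by linarith [le_abs_self θ]⟩, hyθ⟩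

lemma norm_eq_of_mem_flowOrbit_rotFlowExp {x y : circlesExp} (hy : y ∈ flowOrbit rotFlowExp x) :
    ‖(y : ℂ)‖ = ‖(x : ℂ)‖ := by
  obtain ⟨t, rfl⟩ := hy
  exact norm_rotFlowExp t x

noncomputable def circlePoint (n : ℕ) : circlesExp :=
  ⟨(Real.exp (-n) : ℂ), Or.inr (mem_iUnion.2 ⟨n, Complex.norm_of_nonneg (exp_pos _).le⟩)⟩

lemma norm_circlePoint (n : ℕ) : ‖(circlePoint n : ℂ)‖ = exp (-(n : ℝ)) :=
  Complex.norm_of_nonneg (exp_pos _).le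

lemma injective_flowOrbit_circlePoint :
    Function.Injective fun n => flowOrbit rotFlowExp (circlePoint n) := by
  intro m n (hmn : flowOrbit rotFlowExp (circlePoint m) = flowOrbit rotFlowExp (circlePoint n))
  have hm : circlePoint m ∈ flowOrbit rotFlowExp (circlePoint n) :=
    hmn ▸ ⟨0, rotFlowExp_zero_left _⟩
  have := norm_eq_of_mem_flowOrbit_rotFlowExp hm
  rw [norm_circlePoint, norm_circlePoint, exp_eq_exp, neg_inj] at this
  exact_mod_cast this

/-- The rotation flow on the union of the origin and the circles of radii `e^{-n}` is a
well-defined singular-expansive flow having infinitely many periodic orbits of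
(least) period `2π`: indeed, every point other than the origin is a periodic point of
least period `2π`. -/
theorem rotation_flow_on_exp_circles_singular_expansive_infinitely_many_periodic_orbits :
    IsFlowMap rotFlowExp ∧
    SingularExpansiveOn rotFlowExp Set.univ ∧
    (∀ x : circlesExp, (x : ℂ) ≠ 0 →
      x ∉ SingSet rotFlowExp ∧ rotFlowExp (2 * Real.pi) x = x ∧
        ∀ τ : ℝ, 0 < τ → rotFlowExp τ x = x → 2 * Real.pi ≤ τ) ∧
    Set.Infinite {O : Set circlesExp | ∃ x : circlesExp,
      x ∉ SingSet rotFlowExp ∧ rotFlowExp (2 * Real.pi) x = x ∧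
      (∀ τ : ℝ, 0 < τ → rotFlowExp τ x = x → 2 * Real.pi ≤ τ) ∧
      O = flowOrbit rotFlowExp x} := by
  refine ⟨isFlowMap_rotFlowExp, singularExpansiveOn_rotFlowExp,
    fun x hx => hasLeastPeriod_rotFlowExp hx, ?_⟩
  refine infinite_of_injective_forall_mem injective_flowOrbit_circlePoint fun n => ?_
  obtain ⟨hsing, hperiod, hleast⟩ :=
    hasLeastPeriod_rotFlowExp (x := circlePoint n) (Complex.ofReal_ne_zero.2 (exp_pos _).ne')
  exact ⟨circlePoint n, hsing, hperiod, hleast, rfl⟩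
end

section
/- Let X = [0,1] with the Euclidean metric and define φ : ℝ × X → X by φ_t(x) = x e^t / (1 + x(e^t − 1)). Then φ is a well-defined flow on X, and for every ε>0 there exists δ ∈ (0,1/2) such that for all x,y ∈ [0,1] with |x − y| ≤ δ·min{x, 1−x}, there exists t ∈ [−ε,ε] with φ_t(x) = y. -/
/-! The odds `x / (1 - x)` conjugate the flow to multiplication by `e^t`, so the time from `x` to
`y` is the log of the odds ratio `y (1 - x) / (x (1 - y))`. If `|x - y| ≤ δ · min{x, 1 - x}`,
then `y / x` and `(1 - y) / (1 - x)` both lie in `[1 - δ, 1 + δ]`, so the odds ratio lies in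
`[(1 - δ)/(1 + δ), (1 + δ)/(1 - δ)]`, which is inside `[e^{-ε}, e^ε]` once
`1 + δ ≤ e^ε (1 - δ)`. -/

open Set Metric Filter

/-- The logistic-type flow `φ_t(x) = x e^t / (1 + x (e^t - 1))` on `[0,1]`. -/
noncomputable def logisticFlow (t x : ℝ) : ℝ :=
  x * Real.exp t / (1 + x * (Real.exp t - 1))

open Real

lemma logisticFlow_denom_pos {x : ℝ} (hx : x ∈ Icc (0 : ℝ) 1) (t : ℝ) :
    0 < 1 + x * (exp t - 1) := by
  nlinarith [exp_pos t, hx.1, hx.2, mul_nonneg hx.1 (exp_pos t).le]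

lemma logisticFlow_mapsTo (t : ℝ) : MapsTo (logisticFlow t) (Icc 0 1) (Icc 0 1) := by
  intro x hx
  have hd := logisticFlow_denom_pos hx t
  refine ⟨div_nonneg (mul_nonneg hx.1 (exp_pos t).le) hd.le, ?_⟩
  rw [logisticFlow, div_le_one hd]
  nlinarith [hx.2]

@[simp]
lemma logisticFlow_zero (x : ℝ) : logisticFlow 0 x = x := by
  simp [logisticFlow]

lemma logisticFlow_add (t s : ℝ) {x : ℝ} (hx : x ∈ Icc (0 : ℝ) 1) :
    logisticFlow (t + s) x = logisticFlow t (logisticFlow s x) := by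
  have hs := (logisticFlow_denom_pos hx s).ne'
  have hts := (logisticFlow_denom_pos hx (t + s)).ne'
  rw [exp_add] at hts
  have hdenom : 1 + logisticFlow s x * (exp t - 1)
      = (1 + x * (exp t * exp s - 1)) / (1 + x * (exp s - 1)) := by
    rw [logisticFlow]; field_simp; ring
  unfold logisticFlow at hdenom ⊢
  rw [hdenom, exp_add]
  field_simp

lemma continuousOn_logisticFlow :
    ContinuousOn (fun p : ℝ × ℝ => logisticFlow p.1 p.2) (univ ×ˢ Icc (0 : ℝ) 1) := by
  refine ContinuousOn.div (by fun_prop) (by fun_prop) ?_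
  rintro ⟨t, x⟩ ⟨-, hx⟩
  exact (logisticFlow_denom_pos hx t).ne'

lemma logisticFlow_log_oddsRatio {x y : ℝ} (hx0 : 0 < x) (hx1 : x < 1) (hy0 : 0 < y)
    (hy1 : y < 1) : logisticFlow (log (y * (1 - x) / (x * (1 - y)))) x = y := by
  have hr : 0 < y * (1 - x) / (x * (1 - y)) := by
    apply div_pos <;> apply mul_pos <;> linarith
  have hd : 0 < 1 + x * (y * (1 - x) / (x * (1 - y)) - 1) := by
    nlinarith [mul_pos hx0 hr]
  have hy1' : 1 - y ≠ 0 := by linarith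
  rw [logisticFlow, exp_log hr, div_eq_iff hd.ne']
  field_simp
  ring

lemma mem_Ioo_of_abs_sub_le {x y δ : ℝ} (hx0 : 0 < x) (hx1 : x < 1) (hδ : 0 ≤ δ)
    (hδ1 : δ < 1) (h : |x - y| ≤ δ * min x (1 - x)) : y ∈ Ioo 0 1 := by
  rw [abs_sub_le_iff] at h
  constructor <;> nlinarith [min_le_left x (1 - x), min_le_right x (1 - x)]

lemma oddsRatio_le_of_abs_sub_le {x y δ c : ℝ} (hx0 : 0 < x) (hx1 : x < 1) (hδ : 0 ≤ δ)
    (hδ1 : δ < 1) (hδc : 1 + δ ≤ c * (1 - δ)) (h : |x - y| ≤ δ * min x (1 - x)) :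
    y * (1 - x) ≤ c * (x * (1 - y)) := by
  obtain ⟨hy0, hy1⟩ := mem_Ioo_of_abs_sub_le hx0 hx1 hδ hδ1 h
  rw [abs_sub_le_iff] at h
  have hy : y ≤ (1 + δ) * x := by nlinarith [min_le_left x (1 - x)]
  have hy' : (1 - δ) * (1 - x) ≤ 1 - y := by nlinarith [min_le_right x (1 - x)]
  have key : (1 - δ) * (y * (1 - x)) ≤ (1 - δ) * (c * (x * (1 - y))) :=
    calc (1 - δ) * (y * (1 - x)) = y * ((1 - δ) * (1 - x)) := by ring
      _ ≤ (1 + δ) * x * (1 - y) := mul_le_mul hy hy' (by nlinarith) (by nlinarith)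
      _ = (1 + δ) * (x * (1 - y)) := by ring
      _ ≤ c * (1 - δ) * (x * (1 - y)) := by gcongr
      _ = (1 - δ) * (c * (x * (1 - y))) := by ring
  exact le_of_mul_le_mul_left key (by linarith)

lemma exists_logisticFlow_eq_of_abs_sub_le {ε δ x y : ℝ} (hδ : 0 ≤ δ) (hδ1 : δ < 1)
    (hδε : 1 + δ ≤ exp ε * (1 - δ)) (hx : x ∈ Icc (0 : ℝ) 1)
    (h : |x - y| ≤ δ * min x (1 - x)) : ∃ t ∈ Icc (-ε) ε, logisticFlow t x = y := by
  have hε : 0 ≤ ε := by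
    rw [← one_le_exp_iff]; nlinarith [exp_pos ε]
  by_cases hm : min x (1 - x) = 0
  · rw [hm, mul_zero, abs_nonpos_iff, sub_eq_zero] at h
    exact ⟨0, ⟨neg_nonpos.mpr hε, hε⟩, by rw [logisticFlow_zero, h]⟩
  have hm0 : 0 < min x (1 - x) := (le_min hx.1 (by linarith [hx.2])).lt_of_ne' hm
  have hx0 : 0 < x := hm0.trans_le (min_le_left _ _)
  have hx1 : x < 1 := by linarith [hm0.trans_le (min_le_right _ _)]
  obtain ⟨hy0, hy1⟩ := mem_Ioo_of_abs_sub_le hx0 hx1 hδ hδ1 h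
  have hupper := oddsRatio_le_of_abs_sub_le hx0 hx1 hδ hδ1 hδε h
  -- `x ↦ 1 - x` preserves the hypothesis and inverts the odds ratio.
  have hlower : (1 - y) * (1 - (1 - x)) ≤ exp ε * ((1 - x) * (1 - (1 - y))) := by
    refine oddsRatio_le_of_abs_sub_le (by linarith) (by linarith) hδ hδ1 hδε ?_
    rwa [sub_sub_sub_cancel_left, abs_sub_comm, sub_sub_cancel, min_comm]
  have hxy : 0 < x * (1 - y) := mul_pos hx0 (by linarith)
  have hyx : 0 < y * (1 - x) := mul_pos hy0 (by linarith)
  have hr : 0 < y * (1 - x) / (x * (1 - y)) := div_pos hyx hxy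
  refine ⟨log (y * (1 - x) / (x * (1 - y))), ⟨?_, ?_⟩, logisticFlow_log_oddsRatio hx0 hx1 hy0 hy1⟩
  · rw [neg_le, ← log_inv, inv_div, log_le_iff_le_exp (div_pos hxy hyx), div_le_iff₀ hyx]
    linarith
  · rw [log_le_iff_le_exp hr, div_le_iff₀ hxy]
    linarith

lemma exists_one_add_le_exp_mul_one_sub {ε : ℝ} (hε : 0 < ε) :
    ∃ δ : ℝ, 0 < δ ∧ δ < 1 / 2 ∧ 1 + δ ≤ exp ε * (1 - δ) := by
  refine ⟨min (1 / 4) (ε / 4), by positivity, by linarith [min_le_left (1 / 4 : ℝ) (ε / 4)], ?_⟩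
  have h4 := min_le_left (1 / 4 : ℝ) (ε / 4)
  have hε4 := min_le_right (1 / 4 : ℝ) (ε / 4)
  calc 1 + min (1 / 4) (ε / 4) ≤ (ε + 1) * (1 - min (1 / 4) (ε / 4)) := by nlinarith
    _ ≤ exp ε * (1 - min (1 / 4) (ε / 4)) := by
      gcongr
      · linarith
      · linarith [add_one_le_exp ε]

/-- `φ_t(x) = x e^t / (1 + x(e^t − 1))` is a well-defined flow on `[0,1]`, and for every
`ε > 0` there is `δ ∈ (0, 1/2)` such that any `x, y ∈ [0,1]` with
`|x − y| ≤ δ·min{x, 1−x}` satisfy `φ_t(x) = y` for some `t ∈ [−ε, ε]`. -/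
theorem logisticFlow_is_flow_and_ball_in_orbit_segment :
    (∀ t : ℝ, Set.MapsTo (logisticFlow t) (Set.Icc 0 1) (Set.Icc 0 1)) ∧
    (∀ x ∈ Set.Icc (0:ℝ) 1, logisticFlow 0 x = x) ∧
    (∀ t s : ℝ, ∀ x ∈ Set.Icc (0:ℝ) 1,
      logisticFlow (t + s) x = logisticFlow t (logisticFlow s x)) ∧
    ContinuousOn (fun p : ℝ × ℝ => logisticFlow p.1 p.2)
      (Set.univ ×ˢ Set.Icc (0:ℝ) 1) ∧
    (∀ ε > (0:ℝ), ∃ δ : ℝ, 0 < δ ∧ δ < 1/2 ∧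
      ∀ x ∈ Set.Icc (0:ℝ) 1, ∀ y ∈ Set.Icc (0:ℝ) 1,
        |x - y| ≤ δ * min x (1 - x) →
          ∃ t ∈ Set.Icc (-ε) ε, logisticFlow t x = y) := by
  refine ⟨logisticFlow_mapsTo, fun x _ => logisticFlow_zero x,
    fun t s x hx => logisticFlow_add t s hx, continuousOn_logisticFlow, fun ε hε => ?_⟩
  obtain ⟨δ, hδ0, hδ2, hδε⟩ := exists_one_add_le_exp_mul_one_sub hε
  exact ⟨δ, hδ0, hδ2, fun x hx y _ hxy =>
    exists_logisticFlow_eq_of_abs_sub_le hδ0.le (by linarith) hδε hx hxy⟩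
end

section
/- Let φ be a singular-equicontinuous flow on a compact metric space X. Then for every compact set K ⊆ X \ Sing(φ) and every ε>0 there exists a finite set F ⊆ K such that for every y ∈ K there is x ∈ F with d(φ_t(x), φ_t(y)) ≤ ε for all t ∈ ℝ. In particular, for every t>0 the set F is (t,ε)-spanning for K, so the Bowen entropy h(φ,K) is zero for every compact K ⊆ X \ Sing(φ); that is, h*(φ) = 0. -/
open Set Metric Filter
open scoped Classical

variable {X : Type*}

/-- Minimal cardinality of a `(t, ε)`-spanning subset of `K`. -/
noncomputable def spanNum [MetricSpace X] (φ : ℝ → X → X) (K : Set X) (t ε : ℝ) : ℕ :=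
  sInf {n : ℕ | ∃ F : Finset X, ↑F ⊆ K ∧ F.card = n ∧
    K ⊆ ⋃ x ∈ F, {y : X | ∀ s ∈ Set.Icc (0:ℝ) t, dist (φ s x) (φ s y) ≤ ε}}

/-- The topological entropy of the flow `φ` on the compact set `K`,
`h(φ,K) = lim_{ε→0⁺} limsup_{t→∞} (1/t) ln r(t,ε)`; since the inner quantity is
monotone as `ε` decreases, the limit as `ε → 0⁺` is the supremum over `ε > 0`. -/
noncomputable def entOn [MetricSpace X] (φ : ℝ → X → X) (K : Set X) : EReal :=
  ⨆ (ε : ℝ) (_ : 0 < ε),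
    Filter.limsup (fun t : ℝ => ((Real.log (spanNum φ K t ε : ℝ) / t : ℝ) : EReal))
      Filter.atTop

/-- The Bowen entropy of the nonsingular points:
`h*(φ) = sup {h(φ,K) : K ⊆ X \ Sing(φ) compact}`. -/
noncomputable def hStar [MetricSpace X] (φ : ℝ → X → X) : EReal :=
  ⨆ (K : Set X) (_ : IsCompact K) (_ : K ⊆ (SingSet φ)ᶜ), entOn φ K

theorem singular_equicontinuous_zero_bowen_entropy
    [MetricSpace X] [CompactSpace X] (φ : ℝ → X → X) (hφ : IsFlowMap φ)
    (h : SingularEquicontinuous φ) :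
    (∀ K : Set X, IsCompact K → K ⊆ (SingSet φ)ᶜ → ∀ ε > (0:ℝ),
      ∃ F : Finset X, ↑F ⊆ K ∧ ∀ y ∈ K, ∃ x ∈ F, ∀ t : ℝ, dist (φ t x) (φ t y) ≤ ε) ∧
    (∀ K : Set X, IsCompact K → K ⊆ (SingSet φ)ᶜ → entOn φ K = 0) ∧
    hStar φ = 0 := by
  have part1 : ∀ K : Set X, IsCompact K → K ⊆ (SingSet φ)ᶜ → ∀ ε > (0:ℝ),
      ∃ F : Finset X, ↑F ⊆ K ∧ ∀ y ∈ K, ∃ x ∈ F, ∀ t : ℝ, dist (φ t x) (φ t y) ≤ ε := by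
    intro K hK hKs ε hε
    rcases K.eq_empty_or_nonempty with rfl | hKne
    · exact ⟨∅, by simp, by simp⟩
    obtain ⟨δ, hδ, hδ'⟩ := h ε hε
    obtain ⟨c, hc, hcK⟩ : ∃ c > (0:ℝ), ∀ x ∈ K, c ≤ distToSet x (SingSet φ) := by
      by_cases hS : SingSet φ = ∅
      · refine ⟨Metric.diam (univ : Set X), ?_, fun x hx => by simp [distToSet, hS]⟩
        obtain ⟨x₀, hx₀⟩ := hKne
        have hx₀' := hKs hx₀
        simp only [mem_compl_iff, SingSet, mem_setOf_eq, not_forall] at hx₀'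
        obtain ⟨t, ht⟩ := hx₀'
        calc (0:ℝ) < dist (φ t x₀) x₀ := dist_pos.mpr ht
          _ ≤ _ := Metric.dist_le_diam_of_mem isCompact_univ.isBounded trivial trivial
      · have hSne : (SingSet φ).Nonempty := Set.nonempty_iff_ne_empty.mpr hS
        have hScl : IsClosed (SingSet φ) := by
          have heq : SingSet φ = ⋂ t : ℝ, {x : X | φ t x = x} := by
            ext x; simp [SingSet]
          rw [heq]
          refine isClosed_iInter fun t => isClosed_eq ?_ continuous_id
          exact hφ.1.comp (Continuous.prodMk_right t)
        have hcont : Continuous fun x : X => Metric.infDist x (SingSet φ) :=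
          continuous_infDist_pt _
        obtain ⟨x₀, hx₀K, hx₀min⟩ := hK.exists_isMinOn hKne hcont.continuousOn
        refine ⟨Metric.infDist x₀ (SingSet φ), ?_, fun x hx => by
          simpa [distToSet, hS] using isMinOn_iff.mp hx₀min x hx⟩
        have : x₀ ∉ SingSet φ := hKs hx₀K
        exact (hScl.notMem_iff_infDist_pos hSne).mp this
    have hcover : K ⊆ ⋃ x ∈ K, Metric.ball x (δ * c) :=
      fun y hy => Set.mem_biUnion hy (Metric.mem_ball_self (by positivity))
    obtain ⟨s, hsK, hsfin, hscov⟩ :=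
      hK.elim_finite_subcover_image (fun x _ => Metric.isOpen_ball) hcover
    refine ⟨hsfin.toFinset, by simpa using hsK, fun y hy => ?_⟩
    have := hscov hy
    simp only [Set.mem_iUnion, exists_prop] at this
    obtain ⟨x, hxs, hyx⟩ := this
    refine ⟨x, hsfin.mem_toFinset.mpr hxs, ?_⟩
    apply hδ'
    have hxy : dist x y < δ * c := by rw [dist_comm]; exact Metric.mem_ball.mp hyx
    calc dist x y ≤ δ * c := hxy.le
      _ ≤ δ * distToSet x (SingSet φ) :=
        mul_le_mul_of_nonneg_left (hcK x (hsK hxs)) hδ.le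
  have part2 : ∀ K : Set X, IsCompact K → K ⊆ (SingSet φ)ᶜ → entOn φ K = 0 := by
    intro K hK hKs
    have key : ∀ ε > (0:ℝ),
        Filter.limsup (fun t : ℝ => ((Real.log (spanNum φ K t ε : ℝ) / t : ℝ) : EReal))
          Filter.atTop = 0 := by
      intro ε hε
      obtain ⟨F, hFK, hF⟩ := part1 K hK hKs ε hε
      have hspan : ∀ t : ℝ, spanNum φ K t ε ≤ F.card := by
        intro t
        apply Nat.sInf_le
        refine ⟨F, hFK, rfl, fun y hy => ?_⟩
        obtain ⟨x, hx, hxy⟩ := hF y hy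
        exact Set.mem_biUnion hx fun s _ => hxy s
      have hlogmono : ∀ m : ℕ, m ≤ F.card → Real.log (m : ℝ) ≤ Real.log ((F.card : ℝ) + 1) := by
        intro m hm
        rcases Nat.eq_zero_or_pos m with rfl | hmpos
        · simpa using Real.log_nonneg (by linarith [Nat.cast_nonneg (α := ℝ) F.card])
        · apply Real.log_le_log (by exact_mod_cast hmpos)
          have : (m : ℝ) ≤ (F.card : ℝ) := by exact_mod_cast hm
          linarith
      have h1 : Tendsto (fun t : ℝ => Real.log (spanNum φ K t ε : ℝ) / t) atTop (nhds 0) := by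
        apply squeeze_zero' (g := fun t : ℝ => Real.log ((F.card : ℝ) + 1) / t)
        · filter_upwards [eventually_gt_atTop (0:ℝ)] with t ht
          exact div_nonneg (Real.log_natCast_nonneg _) ht.le
        · filter_upwards [eventually_gt_atTop (0:ℝ)] with t ht
          exact div_le_div_of_nonneg_right (hlogmono _ (hspan t)) ht.le
        · exact Tendsto.div_atTop tendsto_const_nhds tendsto_id
      have h2 : Tendsto (fun t : ℝ => ((Real.log (spanNum φ K t ε : ℝ) / t : ℝ) : EReal))
          atTop (nhds (0 : EReal)) := by
        have := EReal.tendsto_coe.mpr h1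
        simpa using this
      exact h2.limsup_eq
    unfold entOn
    refine le_antisymm (iSup₂_le fun ε hε => (key ε hε).le) ?_
    exact le_iSup₂_of_le 1 one_pos (key 1 one_pos).ge
  refine ⟨part1, part2, ?_⟩
  unfold hStar
  refine le_antisymm (iSup_le fun K => iSup_le fun hK => iSup_le fun hKs => (part2 K hK hKs).le) ?_
  refine le_iSup_of_le ∅ (le_iSup_of_le isCompact_empty (le_iSup_of_le (Set.empty_subset _)
    (part2 ∅ isCompact_empty (Set.empty_subset _)).ge))
end

section
/- Let φ be a flow on a compact metric space X. If Ω(φ) \ Sing(φ) is a closed subset of X, then h*(φ) = h(φ); that is, the Bowen entropy of the nonsingular points equals the topological entropy of φ. -/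
open Set Metric Filter
open scoped Classical

variable {X : Type*}

/-- The nonwandering set of a flow. -/
def NonWandering [TopologicalSpace X] (φ : ℝ → X → X) : Set X :=
  {x : X | ∀ U ∈ nhds x, ∀ T : ℝ, 0 < T → ∃ t : ℝ, T ≤ t ∧ (φ t '' U ∩ U).Nonempty}

/-! The inequality `h* ≤ h` is monotonicity of entropy in the set. For the converse, closedness of
`Ω \ Sing` gives `σ₀ > 0` such that every nonsingular point within `σ₀` of `Sing` is wandering.
Cut an orbit segment of length `t` into blocks of length `T` and code each block by its initial
point: on the compact set `K ⊆ X \ Sing` of points at distance `≥ σ₀` from `Sing`, by a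
`(T, ε/2)`-spanning set of `K`; very close to `Sing` the flow hardly moves during time `T`, so a
point of a fixed net suffices; the remaining annulus has compact closure consisting of wandering
points, so an orbit starts only boundedly many blocks there, and those are coded unit time by unit
time. Hence `r(t, ε) ≤ (r_K(T, ε/2) + N)^(t/T + 1) · C_T`, and letting `t → ∞`, then `T → ∞`,
gives `h(φ) ≤ h(φ, K) ≤ h*(φ)`. -/

open Topology

def BowenClose [PseudoMetricSpace X] (φ : ℝ → X → X) (t ε : ℝ) (x y : X) : Prop :=
  ∀ s ∈ Icc (0 : ℝ) t, dist (φ s x) (φ s y) ≤ ε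

noncomputable def spanRate [MetricSpace X] (φ : ℝ → X → X) (K : Set X) (ε : ℝ) : EReal :=
  limsup (fun t : ℝ => ((Real.log (spanNum φ K t ε : ℝ) / t : ℝ) : EReal)) atTop

noncomputable def visitTimes (φ : ℝ → X → X) (T : ℝ) (U : Set X) (x : X) (n : ℕ) : Finset ℕ :=
  (Finset.range n).filter fun j => φ (j * T) x ∈ U

theorem visitTimes_mono {φ : ℝ → X → X} {T : ℝ} {U V : Set X} (h : U ⊆ V) (x : X) (n : ℕ) :
    visitTimes φ T U x n ⊆ visitTimes φ T V x n :=
  Finset.monotone_filter_right _ fun _ _ hj => h hj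

theorem log_natCast_le_log_natCast {m n : ℕ} (h : m ≤ n) : Real.log m ≤ Real.log n := by
  rcases m.eq_zero_or_pos with rfl | hm
  · simpa using Real.log_natCast_nonneg n
  · exact Real.log_le_log (by exact_mod_cast hm) (by exact_mod_cast h)

theorem log_natCast_add_le (m n : ℕ) :
    Real.log ((m + n : ℕ) : ℝ) ≤ Real.log m + Real.log ((n + 1 : ℕ) : ℝ) := by
  rcases m.eq_zero_or_pos with rfl | hm
  · simpa using log_natCast_le_log_natCast n.le_succ
  · rw [← Real.log_mul (by positivity) (by positivity), ← Nat.cast_mul]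
    exact log_natCast_le_log_natCast (by nlinarith)

theorem card_le_of_forall_sub_lt {s : Finset ℕ} {m : ℕ}
    (h : ∀ i ∈ s, ∀ j ∈ s, i ≤ j → j - i < m) : s.card ≤ m := by
  rcases s.eq_empty_or_nonempty with rfl | hs
  · simp
  calc s.card ≤ (Finset.Ico (s.min' hs) (s.min' hs + m)).card := by
        refine Finset.card_le_card fun j hj => Finset.mem_Ico.2 ⟨s.min'_le j hj, ?_⟩
        have := h _ (s.min'_mem hs) j hj (s.min'_le j hj)
        omega
    _ = m := by simp

theorem le_limsup_of_forall_le_add_div {f : ℝ → ℝ} {L : EReal} (c : ℝ)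
    (h : ∀ T ≥ 1, L ≤ (((f T + c) / T : ℝ) : EReal)) :
    L ≤ limsup (fun T : ℝ => ((f T / T : ℝ) : EReal)) atTop := by
  have hc : Tendsto (fun T : ℝ => ((c / T : ℝ) : EReal)) atTop (𝓝 0) :=
    EReal.tendsto_coe.2 (tendsto_const_nhds.div_atTop tendsto_id)
  calc L ≤ limsup ((fun T : ℝ => ((f T / T : ℝ) : EReal)) + fun T : ℝ => ((c / T : ℝ) : EReal))
        atTop := by
        refine le_limsup_of_frequently_le ((eventually_ge_atTop 1).mono fun T hT => ?_).frequently
        simpa [add_div] using h T hT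
    _ ≤ limsup (fun T : ℝ => ((f T / T : ℝ) : EReal)) atTop + 0 := by
        rw [← hc.limsup_eq]
        exact EReal.limsup_add_le (.inr (by simp [hc.limsup_eq])) (.inr (by simp [hc.limsup_eq]))
    _ = _ := add_zero _

theorem limsup_log_div_le_of_le_pow {f : ℝ → ℕ} {T : ℝ} (hT : 0 < T) {C₁ C₂ : ℕ}
    (hC₁ : 0 < C₁) (hC₂ : 0 < C₂) (hf : ∀ t, f t ≤ C₁ ^ (⌊t / T⌋₊ + 1) * C₂) :
    limsup (fun t : ℝ => ((Real.log (f t) / t : ℝ) : EReal)) atTop ≤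
      ((Real.log C₁ / T : ℝ) : EReal) := by
  set c := Real.log C₁ + Real.log C₂
  have hlim : Tendsto (fun t : ℝ => ((Real.log C₁ / T + c / t : ℝ) : EReal)) atTop
      (𝓝 ((Real.log C₁ / T : ℝ) : EReal)) := by
    refine EReal.tendsto_coe.2 ?_
    simpa using (tendsto_const_nhds (x := Real.log C₁ / T)).add
      ((tendsto_const_nhds (x := c)).div_atTop tendsto_id)
  refine (limsup_le_limsup ((eventually_gt_atTop 0).mono fun t ht => ?_)).trans hlim.limsup_eq.le
  have hlog : Real.log (f t) ≤ (⌊t / T⌋₊ + 1) * Real.log C₁ + Real.log C₂ := by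
    calc Real.log (f t) ≤ Real.log ((C₁ ^ (⌊t / T⌋₊ + 1) * C₂ : ℕ) : ℝ) :=
          log_natCast_le_log_natCast (hf t)
      _ = _ := by
          push_cast
          rw [Real.log_mul (pow_ne_zero _ (by exact_mod_cast hC₁.ne')) (by exact_mod_cast hC₂.ne'),
            Real.log_pow]
          push_cast
          ring
  have hfloor : (⌊t / T⌋₊ : ℝ) * Real.log C₁ ≤ t / T * Real.log C₁ :=
    mul_le_mul_of_nonneg_right (Nat.floor_le (by positivity)) (Real.log_natCast_nonneg C₁)
  refine EReal.coe_le_coe_iff.2 ((div_le_iff₀ ht).2 ?_)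
  rw [add_mul, div_mul_cancel₀ _ ht.ne']
  have : t / T * Real.log C₁ = Real.log C₁ / T * t := by ring
  linarith

namespace BowenClose

variable [PseudoMetricSpace X] {φ : ℝ → X → X} {t ε ε' : ℝ} {x y z : X}

theorem symm (h : BowenClose φ t ε x y) : BowenClose φ t ε y x :=
  fun s hs => dist_comm (φ s y) (φ s x) ▸ h s hs

theorem trans (h₁ : BowenClose φ t ε x y) (h₂ : BowenClose φ t ε' y z) :
    BowenClose φ t (ε + ε') x z :=
  fun s hs => (dist_triangle _ _ _).trans (add_le_add (h₁ s hs) (h₂ s hs))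

theorem mono (h : BowenClose φ t ε x y) (hε : ε ≤ ε') : BowenClose φ t ε' x y :=
  fun s hs => (h s hs).trans hε

theorem dist_le (hφ : IsFlowMap φ) (ht : 0 ≤ t) (h : BowenClose φ t ε x y) : dist x y ≤ ε := by
  simpa only [hφ.2.1] using h 0 ⟨le_rfl, ht⟩

end BowenClose

theorem bowenClose_of_displacement_le [PseudoMetricSpace X] {φ : ℝ → X → X} {T η δ : ℝ} {x y : X}
    (hx : ∀ u ∈ Icc 0 T, dist (φ u x) x ≤ η) (hy : ∀ u ∈ Icc 0 T, dist (φ u y) y ≤ η)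
    (hxy : dist x y ≤ δ) : BowenClose φ T (η + δ + η) x y := fun u hu => by
  have := dist_triangle4 (φ u x) x y (φ u y)
  linarith [hx u hu, dist_comm (φ u y) y ▸ hy u hu]

section Flow

variable [MetricSpace X] {φ : ℝ → X → X}

theorem isClosed_singSet (hφ : IsFlowMap φ) : IsClosed (SingSet φ) := by
  have : SingSet φ = ⋂ t : ℝ, {x : X | φ t x = x} := by ext; simp [SingSet]
  rw [this]
  exact isClosed_iInter fun t => isClosed_eq (hφ.1.comp (Continuous.prodMk_right t)) continuous_id

theorem bowenClose_of_blocks (hφ : IsFlowMap φ) {t T ε : ℝ} (hT : 0 < T) {x y : X}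
    (h : ∀ j : ℕ, j ≤ ⌊t / T⌋₊ → BowenClose φ T ε (φ (j * T) x) (φ (j * T) y)) :
    BowenClose φ t ε x y := by
  rintro s ⟨hs₀, hst⟩
  set j := ⌊s / T⌋₊
  have hjs : (j : ℝ) * T ≤ s := (le_div_iff₀ hT).1 (Nat.floor_le (div_nonneg hs₀ hT.le))
  have hsj : s < (j + 1) * T := (div_lt_iff₀ hT).1 (Nat.lt_floor_add_one _)
  have hflow : ∀ z, φ s z = φ (s - j * T) (φ (j * T) z) := fun z => by
    rw [← hφ.2.2, sub_add_cancel]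
  rw [hflow x, hflow y]
  exact h j (Nat.floor_le_floor (div_le_div_of_nonneg_right hst hT.le)) _
    ⟨by linarith, by linarith⟩

theorem card_visitTimes_le (hφ : IsFlowMap φ) {U : Set X} {C T : ℝ}
    (hU : ∀ a ≥ C, φ a '' U ∩ U = ∅) (hT : 1 ≤ T) (x : X) (n : ℕ) :
    (visitTimes φ T U x n).card ≤ ⌈C⌉₊ := by
  refine card_le_of_forall_sub_lt fun i hi j hj hij => ?_
  simp only [visitTimes, Finset.mem_filter] at hi hj
  by_contra! hCj
  have hC : C ≤ ((j - i : ℕ) : ℝ) * T := by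
    have h1 : (⌈C⌉₊ : ℝ) ≤ ((j - i : ℕ) : ℝ) := by exact_mod_cast hCj
    nlinarith [Nat.le_ceil C, (Nat.cast_nonneg (j - i) : (0 : ℝ) ≤ _)]
  have hmem : φ (j * T) x ∈ φ ((j - i : ℕ) * T) '' U ∩ U := by
    refine ⟨⟨_, hi.2, ?_⟩, hj.2⟩
    rw [← hφ.2.2, Nat.cast_sub hij]
    ring_nf
  simp [hU _ hC] at hmem

theorem exists_nhds_wandering {z : X} (hz : z ∉ NonWandering φ) :
    ∃ U ∈ 𝓝 z, ∃ C, ∀ a ≥ C, φ a '' U ∩ U = ∅ := by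
  simp only [NonWandering, mem_ofPred_eq, not_forall, not_exists, not_and,
    not_nonempty_iff_eq_empty] at hz
  obtain ⟨U, hU, C, -, hC⟩ := hz
  exact ⟨U, hU, C, hC⟩

theorem IsCompact.exists_card_visitTimes_le (hφ : IsFlowMap φ) {Z : Set X} (hZ : IsCompact Z)
    (hZΩ : Disjoint Z (NonWandering φ)) {T : ℝ} (hT : 1 ≤ T) :
    ∃ S, ∀ x n, (visitTimes φ T Z x n).card ≤ S := by
  choose! U hU C hC using fun z (hz : z ∈ Z) => exists_nhds_wandering (hZΩ.notMem_of_mem_left hz)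
  obtain ⟨F, hFZ, hZF⟩ := hZ.elim_nhds_subcover U hU
  refine ⟨∑ z ∈ F, ⌈C z⌉₊, fun x n => ?_⟩
  calc (visitTimes φ T Z x n).card ≤ (F.biUnion fun z => visitTimes φ T (U z) x n).card := by
        refine Finset.card_le_card fun j hj => ?_
        simp only [visitTimes, Finset.mem_filter] at hj
        obtain ⟨z, hz, hjz⟩ := mem_iUnion₂.1 (hZF hj.2)
        exact Finset.mem_biUnion.2 ⟨z, hz, Finset.mem_filter.2 ⟨hj.1, hjz⟩⟩
    _ ≤ ∑ z ∈ F, (visitTimes φ T (U z) x n).card := Finset.card_biUnion_le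
    _ ≤ _ := Finset.sum_le_sum fun z hz => card_visitTimes_le hφ (hC z (hFZ z hz)) hT x n

end Flow

section Spanning

variable [MetricSpace X] {φ : ℝ → X → X} {K : Set X} {t ε : ℝ}

theorem IsFlowMap.exists_pos_bowenClose [CompactSpace X] (hφ : IsFlowMap φ) (t : ℝ)
    (hε : 0 < ε) : ∃ δ > 0, ∀ x y : X, dist x y < δ → BowenClose φ t ε x y := by
  obtain ⟨δ, hδ, H⟩ := Metric.uniformContinuousOn_iff.1
    ((isCompact_Icc.prod isCompact_univ).uniformContinuousOn_of_continuous hφ.1.continuousOn) ε hε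
  refine ⟨δ, hδ, fun x y hxy s hs => (H (s, x) ⟨hs, mem_univ _⟩ (s, y) ⟨hs, mem_univ _⟩ ?_).le⟩
  simpa [Prod.dist_eq] using hxy

theorem spanNum_le_card {F : Finset X} (hFK : ↑F ⊆ K)
    (hF : K ⊆ ⋃ x ∈ F, {y | BowenClose φ t ε x y}) : spanNum φ K t ε ≤ F.card :=
  Nat.sInf_le ⟨F, hFK, rfl, hF⟩

theorem exists_spanning_card_eq [CompactSpace X] (hφ : IsFlowMap φ) (hK : IsCompact K) (t : ℝ)
    (hε : 0 < ε) : ∃ F : Finset X, ↑F ⊆ K ∧ F.card = spanNum φ K t ε ∧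
      K ⊆ ⋃ x ∈ F, {y | BowenClose φ t ε x y} := by
  obtain ⟨δ, hδ, hclose⟩ := hφ.exists_pos_bowenClose t hε
  obtain ⟨F, hFK, hF, hcov⟩ := finite_cover_balls_of_compact hK hδ
  refine Nat.sInf_mem (s := {n | ∃ F : Finset X, ↑F ⊆ K ∧ F.card = n ∧
    K ⊆ ⋃ x ∈ F, {y | BowenClose φ t ε x y}}) ⟨_, hF.toFinset, by simpa using hFK, rfl, fun y hy => ?_⟩
  obtain ⟨x, hx, hyx⟩ := mem_iUnion₂.1 (hcov hy)
  exact mem_iUnion₂.2 ⟨x, hF.mem_toFinset.2 hx, hclose x y (by rwa [dist_comm])⟩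

theorem exists_code_of_spanning {F : Finset X}
    (hF : K ⊆ ⋃ x ∈ F, {y | BowenClose φ t ε x y}) : ∃ c : X → X, (∀ y ∈ K, c y ∈ F) ∧
      ∀ y ∈ K, ∀ z ∈ K, c y = c z → BowenClose φ t (ε + ε) y z := by
  let c := fun y => if h : ∃ x ∈ F, BowenClose φ t ε x y then h.choose else y
  have hc : ∀ y ∈ K, c y ∈ F ∧ BowenClose φ t ε (c y) y := fun y hy => by
    have h : ∃ x ∈ F, BowenClose φ t ε x y := by simpa using hF hy
    simpa only [c, dif_pos h] using h.choose_spec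
  refine ⟨c, fun y hy => (hc y hy).1, fun y hy z hz hyz => (hc y hy).2.symm.trans ?_⟩
  rw [hyz]
  exact (hc z hz).2

theorem spanNum_le_card_of_fibers {ι : Type*} (q : X → ι) (C : Finset ι)
    (hqC : ∀ x ∈ K, q x ∈ C) (hq : ∀ x ∈ K, ∀ y ∈ K, q x = q y → BowenClose φ t ε x y) :
    spanNum φ K t ε ≤ C.card := by
  rcases K.eq_empty_or_nonempty with rfl | ⟨x₀, -⟩
  · exact (spanNum_le_card (F := ∅) (by simp) (by simp)).trans (Nat.zero_le _)
  have : Nonempty X := ⟨x₀⟩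
  refine (spanNum_le_card (F := (C.filter (· ∈ q '' K)).image (Function.invFunOn q K)) ?_ ?_).trans
    (Finset.card_image_le.trans (Finset.card_filter_le _ _))
  · intro x hx
    obtain ⟨c, hc, rfl⟩ := Finset.mem_image.1 hx
    exact Function.invFunOn_mem (Finset.mem_filter.1 hc).2
  · intro y hy
    have hqy : ∃ a ∈ K, q a = q y := ⟨y, hy, rfl⟩
    refine mem_iUnion₂.2 ⟨_, Finset.mem_image_of_mem _ (Finset.mem_filter.2 ⟨hqC y hy, hqy⟩), ?_⟩
    exact hq _ (Function.invFunOn_mem hqy) y hy (Function.invFunOn_eq hqy)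

theorem spanNum_le_spanNum_univ [CompactSpace X] (hφ : IsFlowMap φ) (K : Set X) (t : ℝ)
    (hε : 0 < ε) : spanNum φ K t ε ≤ spanNum φ univ t (ε / 2) := by
  obtain ⟨F, -, hcard, hF⟩ := exists_spanning_card_eq hφ isCompact_univ t (half_pos hε)
  obtain ⟨c, hcF, hc⟩ := exists_code_of_spanning hF
  rw [← hcard, ← add_halves ε]
  exact spanNum_le_card_of_fibers c F (fun x _ => hcF x trivial)
    fun x _ y _ => hc x trivial y trivial

theorem spanRate_le_spanRate {L : Set X} {ε' : ℝ} (h : ∀ t, spanNum φ K t ε ≤ spanNum φ L t ε') :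
    spanRate φ K ε ≤ spanRate φ L ε' :=
  limsup_le_limsup <| (eventually_gt_atTop 0).mono fun t ht => EReal.coe_le_coe_iff.2 <|
    div_le_div_of_nonneg_right (log_natCast_le_log_natCast (h t)) ht.le

theorem spanRate_le_entOn (hε : 0 < ε) : spanRate φ K ε ≤ entOn φ K :=
  le_iSup₂ (f := fun e (_ : 0 < e) => spanRate φ K e) ε hε

theorem entOn_le_hStar (hK : IsCompact K) (hKS : K ⊆ (SingSet φ)ᶜ) : entOn φ K ≤ hStar φ :=
  le_iSup_of_le K (le_iSup₂_of_le hK hKS le_rfl)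

theorem hStar_le_entOn_univ [CompactSpace X] (hφ : IsFlowMap φ) : hStar φ ≤ entOn φ univ :=
  iSup_le fun K => iSup₂_le fun _ _ => iSup₂_le fun _ hε =>
    (spanRate_le_spanRate (spanNum_le_spanNum_univ hφ K · hε)).trans
      (spanRate_le_entOn (half_pos hε))

end Spanning

section Coding

variable [MetricSpace X] {φ : ℝ → X → X} {T ε : ℝ} {Z : Set X} {β γ : Type*} {b : X → β}
  {u : X → γ}

theorem bowenClose_of_unitCodes (hφ : IsFlowMap φ)
    (hu : ∀ z z', u z = u z' → BowenClose φ 1 ε z z') {z z' : X}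
    (h : ∀ k : ℕ, k ≤ ⌊T⌋₊ → u (φ k z) = u (φ k z')) : BowenClose φ T ε z z' :=
  bowenClose_of_blocks hφ one_pos fun k hk => by
    simpa only [mul_one] using hu _ _ (h k (by simpa only [div_one] using hk))

theorem bowenClose_of_blockCodes (hφ : IsFlowMap φ) (hT : 0 < T)
    (hb : ∀ z z', b z = b z' → (z ∈ Z ↔ z' ∈ Z) ∧ (z ∉ Z → BowenClose φ T ε z z'))
    (hu : ∀ z z', u z = u z' → BowenClose φ 1 ε z z') {t : ℝ} {x y : X}
    (hbxy : ∀ j : ℕ, j ≤ ⌊t / T⌋₊ → b (φ (j * T) x) = b (φ (j * T) y))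
    (huxy : ∀ j : ℕ, j ≤ ⌊t / T⌋₊ → φ (j * T) x ∈ Z →
      ∀ k : ℕ, k ≤ ⌊T⌋₊ → u (φ k (φ (j * T) x)) = u (φ k (φ (j * T) y))) :
    BowenClose φ t ε x y :=
  bowenClose_of_blocks hφ hT fun j hj => by
    by_cases hjZ : φ (j * T) x ∈ Z
    · exact bowenClose_of_unitCodes hφ hu (huxy j hj hjZ)
    · exact (hb _ _ (hbxy j hj)).2 hjZ

/-- Blocks starting outside `Z` are coded by `b`; the at most `S` blocks starting in `Z` are
coded by the `u`-codes of their unit-time pieces, listed in increasing order and padded with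
`none` to length `S`. -/
theorem spanNum_univ_le_of_blockCodes (hφ : IsFlowMap φ) (hT : 0 < T) {S : ℕ}
    (hZ : ∀ x n, (visitTimes φ T Z x n).card ≤ S) {Cb : Finset β} (hbC : ∀ z, b z ∈ Cb)
    (hb : ∀ z z', b z = b z' → (z ∈ Z ↔ z' ∈ Z) ∧ (z ∉ Z → BowenClose φ T ε z z'))
    {Cu : Finset γ} (huC : ∀ z, u z ∈ Cu) (hu : ∀ z z', u z = u z' → BowenClose φ 1 ε z z')
    (t : ℝ) :
    spanNum φ univ t ε ≤ Cb.card ^ (⌊t / T⌋₊ + 1) * (Cu.card ^ (⌊T⌋₊ + 1) + 1) ^ S := by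
  set n := ⌊t / T⌋₊
  let trace : X → List (Fin (⌊T⌋₊ + 1) → γ) := fun x =>
    ((visitTimes φ T Z x (n + 1)).sort (· ≤ ·)).map fun (j : ℕ) k => u (φ (k : ℕ) (φ (j * T) x))
  have hlen : ∀ x, (trace x).length ≤ S := fun x => by simpa [trace] using hZ x (n + 1)
  let code : X → (Fin (n + 1) → β) × (Fin S → Option (Fin (⌊T⌋₊ + 1) → γ)) :=
    fun x => (fun j => b (φ (j * T) x), fun p => (trace x)[(p : ℕ)]?)
  calc spanNum φ univ t ε ≤ (Fintype.piFinset (fun _ : Fin (n + 1) => Cb) ×ˢ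
        Fintype.piFinset fun _ : Fin S =>
          (Fintype.piFinset fun _ : Fin (⌊T⌋₊ + 1) => Cu).insertNone).card := by
        refine spanNum_le_card_of_fibers code _ (fun x _ => ?_) fun x _ y _ hxy => ?_
        · simp only [code, Finset.mem_product, Fintype.mem_piFinset, Finset.mem_insertNone]
          refine ⟨fun j => hbC _, fun p v hv => ?_⟩
          obtain ⟨j, -, rfl⟩ := List.mem_map.1 (List.mem_of_getElem? hv)
          simp [huC]
        have hbxy : ∀ j : ℕ, j ≤ n → b (φ (j * T) x) = b (φ (j * T) y) := fun j hj =>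
          congrFun (congrArg Prod.fst hxy) ⟨j, by omega⟩
        have hvis : visitTimes φ T Z x (n + 1) = visitTimes φ T Z y (n + 1) :=
          Finset.filter_congr fun j hj =>
            (hb _ _ (hbxy j (Nat.lt_succ_iff.1 (Finset.mem_range.1 hj)))).1
        have htrace : trace x = trace y := List.ext_getElem? fun p => by
          by_cases hp : p < S
          · exact congrFun (congrArg Prod.snd hxy) ⟨p, hp⟩
          · rw [List.getElem?_eq_none (by linarith [hlen x]),
              List.getElem?_eq_none (by linarith [hlen y])]
        simp only [trace, hvis, List.map_inj_left, Finset.mem_sort] at htrace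
        refine bowenClose_of_blockCodes hφ hT hb hu hbxy fun j hj hjZ k hk => ?_
        refine congrFun (htrace j ?_) ⟨k, by omega⟩
        rw [← hvis]
        exact Finset.mem_filter.2 ⟨Finset.mem_range.2 (by omega), hjZ⟩
    _ = _ := by simp [Fintype.card_piFinset, Finset.prod_const]

end Coding

section Entropy

variable [MetricSpace X] [CompactSpace X] {φ : ℝ → X → X}

theorem exists_thickening_dist_flow_le (hφ : IsFlowMap φ) (T : ℝ) {η : ℝ} (hη : 0 < η) :
    ∃ σ > 0, ∀ x ∈ thickening σ (SingSet φ), ∀ u ∈ Icc 0 T, dist (φ u x) x ≤ η := by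
  obtain ⟨δ, hδ, hclose⟩ := hφ.exists_pos_bowenClose T (half_pos hη)
  refine ⟨min δ (η / 2), lt_min hδ (half_pos hη), fun x hx u hu => ?_⟩
  obtain ⟨p, hp, hxp⟩ := mem_thickening_iff.1 hx
  calc dist (φ u x) x ≤ dist (φ u x) (φ u p) + dist p x := by
        simpa only [hp u] using dist_triangle (φ u x) (φ u p) x
    _ ≤ η / 2 + η / 2 := add_le_add (hclose x p (hxp.trans_le (min_le_left _ _)) u hu)
        (by rw [dist_comm]; exact (hxp.trans_le (min_le_right _ _)).le)
    _ = η := add_halves η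

theorem exists_card_visitTimes_annulus_le (hφ : IsFlowMap φ) {σ₀ σ T : ℝ}
    (hwand : Disjoint (cthickening σ₀ (SingSet φ)) (NonWandering φ \ SingSet φ)) (hσ : 0 < σ)
    (hT : 1 ≤ T) : ∃ S, ∀ x n,
      (visitTimes φ T (thickening σ₀ (SingSet φ) \ thickening σ (SingSet φ)) x n).card ≤ S := by
  have hannulus : Disjoint (cthickening σ₀ (SingSet φ) \ thickening σ (SingSet φ))
      (NonWandering φ) :=
    disjoint_left.2 fun z hz hzΩ => hwand.notMem_of_mem_left hz.1
      ⟨hzΩ, fun hzS => hz.2 (self_subset_thickening hσ _ hzS)⟩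
  obtain ⟨S, hS⟩ :=
    (isClosed_cthickening.sdiff isOpen_thickening).isCompact.exists_card_visitTimes_le hφ hannulus hT
  exact ⟨S, fun x n => (Finset.card_le_card (visitTimes_mono
    (sdiff_subset_sdiff_left (thickening_subset_cthickening _ _)) x n)).trans (hS x n)⟩

theorem exists_spanNum_univ_le (hφ : IsFlowMap φ) {σ₀ : ℝ}
    (hwand : Disjoint (cthickening σ₀ (SingSet φ)) (NonWandering φ \ SingSet φ)) {ε T : ℝ}
    (hε : 0 < ε) (hT : 1 ≤ T) :
    ∃ C > 0, ∀ t, spanNum φ univ t ε ≤ (spanNum φ (thickening σ₀ (SingSet φ))ᶜ T (ε / 2) +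
      spanNum φ univ 1 (ε / 4) + 1) ^ (⌊t / T⌋₊ + 1) * C := by
  obtain ⟨σ, hσ, hslow⟩ := exists_thickening_dist_flow_le hφ T (by positivity : 0 < ε / 4)
  obtain ⟨S, hS⟩ := exists_card_visitTimes_annulus_le hφ hwand hσ hT
  set K := (thickening σ₀ (SingSet φ))ᶜ
  set N := thickening σ (SingSet φ)
  obtain ⟨FK, -, hFK, hFKcov⟩ :=
    exists_spanning_card_eq hφ (K := K) isOpen_thickening.isClosed_compl.isCompact T (half_pos hε)
  obtain ⟨FN, -, hFN, hFNcov⟩ :=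
    exists_spanning_card_eq hφ isCompact_univ 1 (by positivity : 0 < ε / 4)
  obtain ⟨cK, hcKF, hcK⟩ := exists_code_of_spanning hFKcov
  obtain ⟨cN, hcNF, hcN⟩ := exists_code_of_spanning hFNcov
  have hK : ∀ z ∈ K, ∀ z' ∈ K, cK z = cK z' → BowenClose φ T ε z z' :=
    fun z hz z' hz' h => (hcK z hz z' hz' h).mono (add_halves ε).le
  have hN : ∀ z ∈ N, ∀ z' ∈ N, cN z = cN z' → BowenClose φ T ε z z' := fun z hz z' hz' h =>
    (bowenClose_of_displacement_le (hslow z hz) (hslow z' hz')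
      ((hcN z trivial z' trivial h).dist_le hφ zero_le_one)).mono (by linarith)
  let b : X → X ⊕ X ⊕ Unit := fun z =>
    if z ∈ K then .inl (cK z) else if z ∈ N then .inr (.inl (cN z)) else .inr (.inr ())
  have hb : ∀ z z', b z = b z' →
      (z ∈ Kᶜ \ N ↔ z' ∈ Kᶜ \ N) ∧ (z ∉ Kᶜ \ N → BowenClose φ T ε z z') := by
    intro z z' h
    by_cases hzK : z ∈ K <;> by_cases hz'K : z' ∈ K <;> by_cases hzN : z ∈ N <;>
      by_cases hz'N : z' ∈ N <;> simp_all [b]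
  refine ⟨(FN.card ^ (⌊T⌋₊ + 1) + 1) ^ S, by positivity, fun t => ?_⟩
  have := spanNum_univ_le_of_blockCodes hφ (by linarith) (by simpa only [K, compl_compl] using hS)
    (Cb := FK.disjSum (FN.disjSum {()})) ?_ hb (fun z => hcNF z trivial)
    (fun z z' h => (hcN z trivial z' trivial h).mono (by linarith)) t
  · simpa [Finset.card_disjSum, hFK, hFN, add_assoc] using this
  · intro z
    by_cases hzK : z ∈ K <;> by_cases hzN : z ∈ N <;> simp [b, hzK, hzN, hcKF, hcNF]

theorem spanRate_univ_le (hφ : IsFlowMap φ) {σ₀ : ℝ}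
    (hwand : Disjoint (cthickening σ₀ (SingSet φ)) (NonWandering φ \ SingSet φ)) {ε : ℝ}
    (hε : 0 < ε) : spanRate φ univ ε ≤ spanRate φ (thickening σ₀ (SingSet φ))ᶜ (ε / 2) := by
  set N := spanNum φ univ 1 (ε / 4)
  refine le_limsup_of_forall_le_add_div (Real.log ((N + 1 + 1 : ℕ) : ℝ)) fun T hT => ?_
  obtain ⟨C, hC, hbound⟩ := exists_spanNum_univ_le hφ hwand hε hT
  refine (limsup_log_div_le_of_le_pow (by linarith) (Nat.succ_pos _) hC hbound).trans
    (EReal.coe_le_coe_iff.2 (div_le_div_of_nonneg_right ?_ (by linarith)))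
  exact log_natCast_add_le _ (N + 1)

end Entropy

theorem closed_nonwandering_minus_sing_hstar_eq_entropy
    [MetricSpace X] [CompactSpace X] (φ : ℝ → X → X) (hφ : IsFlowMap φ)
    (h : IsClosed (NonWandering φ \ SingSet φ)) :
    hStar φ = entOn φ (Set.univ : Set X) := by
  refine le_antisymm (hStar_le_entOn_univ hφ) ?_
  obtain ⟨σ₀, hσ₀, hsub⟩ := (isClosed_singSet hφ).isCompact.exists_cthickening_subset_open
    h.isOpen_compl fun x hx hx' => hx'.2 hx
  set K := (thickening σ₀ (SingSet φ))ᶜ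
  have hKS : K ⊆ (SingSet φ)ᶜ := compl_subset_compl.2 (self_subset_thickening hσ₀ _)
  refine iSup₂_le fun ε hε => ?_
  calc spanRate φ univ ε ≤ spanRate φ K (ε / 2) :=
        spanRate_univ_le hφ (subset_compl_iff_disjoint_right.1 hsub) hε
    _ ≤ entOn φ K := spanRate_le_entOn (half_pos hε)
    _ ≤ hStar φ := entOn_le_hStar isOpen_thickening.isClosed_compl.isCompact hKS
end
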